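/- arXiv:math/0307321 — 3 statements merged into one kernel-verified Lean document; each statement's English description precedes it below -/
import Mathlib

section
/- Let G be a finite group and let S₁, S₂, S₃ be nonempty finite subsets of G satisfying the triple product property, with |S₁|·|S₂|·|S₃| > 1. Then |G|³ > (|S₁|·|S₂|·|S₃|)². (In particular, the pseudo-exponent of every finite group is strictly greater than 2.) -/
/-- The right quotient set `Q(S) = {s₁s₂⁻¹ : s₁, s₂ ∈ S}` of a subset of a group. -/
def rightQuotient {G : Type*} [Group G] (S : Set G) : Set G :=
  {g | ∃ s₁ ∈ S, ∃ s₂ ∈ S, g = s₁ * s₂⁻¹}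

/-- Subsets `S₁, S₂, S₃` of a group satisfy the triple product property if whenever
`qᵢ ∈ Q(Sᵢ)` and `q₁q₂q₃ = 1`, we have `q₁ = q₂ = q₃ = 1`. -/
def TPP {G : Type*} [Group G] (S₁ S₂ S₃ : Set G) : Prop :=
  ∀ q₁ ∈ rightQuotient S₁, ∀ q₂ ∈ rightQuotient S₂, ∀ q₃ ∈ rightQuotient S₃,
    q₁ * q₂ * q₃ = 1 → q₁ = 1 ∧ q₂ = 1 ∧ q₃ = 1

/-- A group `G` realizes `⟨n₁, n₂, n₃⟩` if there are finite subsets `Sᵢ ⊆ G` with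
`|Sᵢ| = nᵢ` satisfying the triple product property. -/
def Realizes (G : Type*) [Group G] (n₁ n₂ n₃ : ℕ) : Prop :=
  ∃ S₁ S₂ S₃ : Set G, S₁.Finite ∧ S₂.Finite ∧ S₃.Finite ∧
    S₁.ncard = n₁ ∧ S₂.ncard = n₂ ∧ S₃.ncard = n₃ ∧ TPP S₁ S₂ S₃

/-- TPP is invariant under cyclic shifts. -/
lemma tpp_cyclic {G : Type*} [Group G] {S₁ S₂ S₃ : Set G} (h : TPP S₁ S₂ S₃) :
    TPP S₂ S₃ S₁ := by
  intro q₂ hq₂ q₃ hq₃ q₁ hq₁ heq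
  have h1 : q₁ * q₂ * q₃ = 1 := by
    have h2 : q₂ * q₃ = q₁⁻¹ := eq_inv_of_mul_eq_one_left heq
    rw [mul_assoc, h2, mul_inv_cancel]
  obtain ⟨e1, e2, e3⟩ := h q₁ hq₁ q₂ hq₂ q₃ hq₃ h1
  exact ⟨e2, e3, e1⟩

/-- The quotient map `(s₁, s₂) ↦ s₁⁻¹ s₂` is injective under TPP. -/
lemma tpp_inj {G : Type*} [Group G] {S₁ S₂ S₃ : Set G} {c : G} (hc : c ∈ S₃)
    (htpp : TPP S₁ S₂ S₃) :
    Function.Injective (fun p : S₁ × S₂ => (p.1 : G)⁻¹ * p.2) := by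
  rintro ⟨⟨s₁, hs₁⟩, ⟨s₂, hs₂⟩⟩ ⟨⟨t₁, ht₁⟩, ⟨t₂, ht₂⟩⟩ h
  simp only at h
  have h' : s₂ = s₁ * (t₁⁻¹ * t₂) := by rw [← h]; group
  have hq : (t₁ * s₁⁻¹) * (s₂ * t₂⁻¹) * (c * c⁻¹) = 1 := by rw [h']; group
  obtain ⟨e1, e2, _⟩ := htpp _ ⟨t₁, ht₁, s₁, hs₁, rfl⟩ _ ⟨s₂, hs₂, t₂, ht₂, rfl⟩
    _ ⟨c, hc, c, hc, rfl⟩ hq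
  have f1 : s₁ = t₁ := (mul_inv_eq_one.mp e1).symm
  have f2 : s₂ = t₂ := mul_inv_eq_one.mp e2
  simp [Prod.ext_iff, Subtype.ext_iff, f1, f2]

/-- Non-strict pair bound: `|S₁||S₂| ≤ |G|`. -/
lemma pair_le {G : Type*} [Group G] [Fintype G] {S₁ S₂ S₃ : Set G}
    (h₃ : S₃.Nonempty) (htpp : TPP S₁ S₂ S₃) :
    S₁.ncard * S₂.ncard ≤ Fintype.card G := by
  obtain ⟨c, hc⟩ := h₃
  have hinj := tpp_inj hc htpp
  calc S₁.ncard * S₂.ncard = Nat.card (S₁ × S₂ : Type _) := by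
        rw [Nat.card_prod, Nat.card_coe_set_eq, Nat.card_coe_set_eq]
    _ ≤ Nat.card G := Nat.card_le_card_of_injective _ hinj
    _ = Fintype.card G := Nat.card_eq_fintype_card

/-- Strict pair bound when the third set has at least two elements. -/
lemma pair_lt {G : Type*} [Group G] [Fintype G] {S₁ S₂ S₃ : Set G}
    (h₁ : S₁.Nonempty) (h₂ : S₂.Nonempty) (h₃ : 1 < S₃.ncard)
    (htpp : TPP S₁ S₂ S₃) :
    S₁.ncard * S₂.ncard < Fintype.card G := by
  obtain ⟨c, d, hc, hd, hcd⟩ := (Set.one_lt_ncard_iff (Set.toFinite S₃)).mp h₃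
  obtain ⟨a, ha⟩ := h₁
  obtain ⟨b, hb⟩ := h₂
  set f : S₁ × S₂ → G := fun p => (p.1 : G)⁻¹ * p.2 with hf
  have hinj : Function.Injective f := tpp_inj hc htpp
  have hg₀ : a⁻¹ * c * d⁻¹ * b ∉ Set.range f := by
    rintro ⟨⟨⟨s₁, hs₁⟩, ⟨s₂, hs₂⟩⟩, hval⟩
    simp only [hf] at hval
    -- hval : s₁⁻¹ * s₂ = a⁻¹ * c * d⁻¹ * b
    have h' : s₂ = s₁ * (a⁻¹ * c * d⁻¹ * b) := by rw [← hval]; group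
    have hq : (a * s₁⁻¹) * (s₂ * b⁻¹) * (d * c⁻¹) = 1 := by rw [h']; group
    obtain ⟨_, _, e3⟩ := htpp _ ⟨a, ha, s₁, hs₁, rfl⟩ _ ⟨s₂, hs₂, b, hb, rfl⟩
      _ ⟨d, hd, c, hc, rfl⟩ hq
    exact hcd (mul_inv_eq_one.mp e3).symm
  have hss : Set.range f ⊂ Set.univ := by
    rw [Set.ssubset_univ_iff]
    intro hEq
    exact hg₀ (hEq ▸ Set.mem_univ _)
  calc S₁.ncard * S₂.ncard = Nat.card (S₁ × S₂ : Type _) := by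
        rw [Nat.card_prod, Nat.card_coe_set_eq, Nat.card_coe_set_eq]
    _ = Nat.card (Set.range f) := (Nat.card_range_of_injective hinj).symm
    _ = (Set.range f).ncard := (Nat.card_coe_set_eq _)
    _ < (Set.univ : Set G).ncard := Set.ncard_lt_ncard hss Set.finite_univ
    _ = Nat.card G := Set.ncard_univ G
    _ = Fintype.card G := Nat.card_eq_fintype_card

lemma combine_ineq (a b c g : ℕ) (h1 : a * b < g) (h2 : b * c ≤ g) (h3 : c * a ≤ g) :
    (a * b * c) ^ 2 < g ^ 3 := by
  have hg : 0 < g := lt_of_le_of_lt (Nat.zero_le _) h1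
  calc (a * b * c) ^ 2 = (a * b) * ((b * c) * (c * a)) := by ring
    _ ≤ (a * b) * (g * g) := Nat.mul_le_mul_left _ (Nat.mul_le_mul h2 h3)
    _ < g * (g * g) := by
        exact Nat.mul_lt_mul_of_lt_of_le h1 (le_refl _) (Nat.mul_pos hg hg)
    _ = g ^ 3 := by ring

theorem stmt_3 {G : Type*} [Group G] [Fintype G] (S₁ S₂ S₃ : Set G)
    (h₁ : S₁.Nonempty) (h₂ : S₂.Nonempty) (h₃ : S₃.Nonempty)
    (htpp : TPP S₁ S₂ S₃)
    (hcard : 1 < S₁.ncard * S₂.ncard * S₃.ncard) :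
    (S₁.ncard * S₂.ncard * S₃.ncard) ^ 2 < (Fintype.card G) ^ 3 := by
  have htpp2 : TPP S₂ S₃ S₁ := tpp_cyclic htpp
  have htpp3 : TPP S₃ S₁ S₂ := tpp_cyclic htpp2
  have hn₁ : 0 < S₁.ncard := (Set.ncard_pos (Set.toFinite S₁)).mpr h₁
  have hn₂ : 0 < S₂.ncard := (Set.ncard_pos (Set.toFinite S₂)).mpr h₂
  have hn₃ : 0 < S₃.ncard := (Set.ncard_pos (Set.toFinite S₃)).mpr h₃
  have hbig : 1 < S₁.ncard ∨ 1 < S₂.ncard ∨ 1 < S₃.ncard := by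
    by_contra hcon
    push_neg at hcon
    obtain ⟨c1, c2, c3⟩ := hcon
    have e1 : S₁.ncard = 1 := le_antisymm c1 hn₁
    have e2 : S₂.ncard = 1 := le_antisymm c2 hn₂
    have e3 : S₃.ncard = 1 := le_antisymm c3 hn₃
    rw [e1, e2, e3] at hcard
    norm_num at hcard
  rcases hbig with hb | hb | hb
  · have hlt : S₂.ncard * S₃.ncard < Fintype.card G := pair_lt h₂ h₃ hb htpp2
    have hle1 : S₃.ncard * S₁.ncard ≤ Fintype.card G := pair_le h₂ htpp3
    have hle2 : S₁.ncard * S₂.ncard ≤ Fintype.card G := pair_le h₃ htpp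
    have := combine_ineq _ _ _ _ hlt hle1 hle2
    calc (S₁.ncard * S₂.ncard * S₃.ncard) ^ 2
        = (S₂.ncard * S₃.ncard * S₁.ncard) ^ 2 := by ring
      _ < (Fintype.card G) ^ 3 := this
  · have hlt : S₃.ncard * S₁.ncard < Fintype.card G := pair_lt h₃ h₁ hb htpp3
    have hle1 : S₁.ncard * S₂.ncard ≤ Fintype.card G := pair_le h₃ htpp
    have hle2 : S₂.ncard * S₃.ncard ≤ Fintype.card G := pair_le h₁ htpp2
    have := combine_ineq _ _ _ _ hlt hle1 hle2
    calc (S₁.ncard * S₂.ncard * S₃.ncard) ^ 2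
        = (S₃.ncard * S₁.ncard * S₂.ncard) ^ 2 := by ring
      _ < (Fintype.card G) ^ 3 := this
  · have hlt : S₁.ncard * S₂.ncard < Fintype.card G := pair_lt h₁ h₂ hb htpp
    have hle1 : S₂.ncard * S₃.ncard ≤ Fintype.card G := pair_le h₁ htpp2
    have hle2 : S₃.ncard * S₁.ncard ≤ Fintype.card G := pair_le h₂ htpp3
    exact combine_ineq _ _ _ _ hlt hle1 hle2
end

section
/- Let F be a finite field with q elements. In SL₂(F), the three subgroups H₁ = {[[1, x], [0, 1]] : x ∈ F}, H₂ = {[[1, 0], [y, 1]] : y ∈ F}, and H₃ = {[[1+z, z], [−z, 1−z]] : z ∈ F} each have order q and satisfy the triple product property. Consequently, SL₂(F_q), a group of order q³ − q, realizes ⟨q, q, q⟩. -/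
/-- The subgroup (as a set) of upper unitriangular matrices in `SL₂(F)`. -/
def sl2H₁ (F : Type*) [Field F] : Set (Matrix.SpecialLinearGroup (Fin 2) F) :=
  {M | ∃ x : F, (M : Matrix (Fin 2) (Fin 2) F) = !![1, x; 0, 1]}

/-- The subgroup (as a set) of lower unitriangular matrices in `SL₂(F)`. -/
def sl2H₂ (F : Type*) [Field F] : Set (Matrix.SpecialLinearGroup (Fin 2) F) :=
  {M | ∃ y : F, (M : Matrix (Fin 2) (Fin 2) F) = !![1, 0; y, 1]}

/-- The third subgroup (as a set) `{[[1+z, z], [−z, 1−z]] : z ∈ F}` in `SL₂(F)`. -/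
def sl2H₃ (F : Type*) [Field F] : Set (Matrix.SpecialLinearGroup (Fin 2) F) :=
  {M | ∃ z : F, (M : Matrix (Fin 2) (Fin 2) F) = !![1 + z, z; -z, 1 - z]}

open Matrix

lemma one_add_smul_mul_one_add_smul {R A : Type*} [CommSemiring R] [Semiring A] [Algebra R A]
    {N : A} (hN : N * N = 0) (a b : R) : (1 + a • N) * (1 + b • N) = 1 + (a + b) • N := by
  rw [mul_add, add_mul, add_mul, smul_mul_smul, hN, smul_zero, add_zero, one_mul, mul_one,
    one_mul, add_smul, add_assoc]

namespace Matrix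

section Unipotent

variable {R : Type*} [CommRing R] {N : Matrix (Fin 2) (Fin 2) R}

lemma mul_self_eq_zero_of_trace_eq_zero_of_det_eq_zero (htr : N.trace = 0) (hdet : N.det = 0) :
    N * N = 0 := by
  rw [trace_fin_two] at htr
  rw [det_fin_two] at hdet
  ext i j
  fin_cases i <;> fin_cases j <;>
    simp only [Fin.zero_eta, Fin.mk_one, Fin.isValue, mul_apply, Fin.sum_univ_two, zero_apply]
  · linear_combination N 0 0 * htr - hdet
  · linear_combination N 0 1 * htr
  · linear_combination N 1 0 * htr
  · linear_combination N 1 1 * htr - hdet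

lemma det_one_add_smul_of_trace_eq_zero_of_det_eq_zero (htr : N.trace = 0) (hdet : N.det = 0)
    (z : R) : (1 + z • N).det = 1 := by
  rw [trace_fin_two] at htr
  rw [det_fin_two] at hdet
  simp only [det_fin_two, Fin.isValue, add_apply, one_apply_eq, smul_apply, smul_eq_mul, ne_eq,
    zero_ne_one, one_ne_zero, not_false_eq_true, one_apply_ne, zero_add]
  linear_combination z * htr + z ^ 2 * hdet

namespace SpecialLinearGroup

variable (N) in
def unipotentHom (htr : N.trace = 0) (hdet : N.det = 0) :
    Multiplicative R →* SpecialLinearGroup (Fin 2) R where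
  toFun z := ⟨1 + z.toAdd • N, det_one_add_smul_of_trace_eq_zero_of_det_eq_zero htr hdet _⟩
  map_one' := Subtype.ext <| by simp
  map_mul' _ _ := Subtype.ext <| (one_add_smul_mul_one_add_smul
    (mul_self_eq_zero_of_trace_eq_zero_of_det_eq_zero htr hdet) _ _).symm

variable (htr : N.trace = 0) (hdet : N.det = 0)

lemma mem_range_unipotentHom {M : SpecialLinearGroup (Fin 2) R} :
    M ∈ (unipotentHom N htr hdet).range ↔ ∃ z : R, (M : Matrix (Fin 2) (Fin 2) R) = 1 + z • N := by
  constructor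
  · rintro ⟨z, rfl⟩
    exact ⟨z.toAdd, rfl⟩
  · rintro ⟨z, hz⟩
    exact ⟨.ofAdd z, Subtype.ext hz.symm⟩

lemma unipotentHom_injective [NoZeroDivisors R] (hN : N ≠ 0) :
    Function.Injective (unipotentHom N htr hdet) := fun _ _ h ↦
  Multiplicative.toAdd.injective <| smul_left_injective R hN <|
    add_left_cancel (congrArg Subtype.val h)

lemma ncard_range_unipotentHom [NoZeroDivisors R] (hN : N ≠ 0) :
    ((unipotentHom N htr hdet).range : Set (SpecialLinearGroup (Fin 2) R)).ncard = Nat.card R := by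
  rw [MonoidHom.coe_range, Set.ncard_range_of_injective (unipotentHom_injective htr hdet hN)]
  rfl

end SpecialLinearGroup

end Unipotent

namespace SpecialLinearGroup

lemma card_GL_eq_card_units_mul_card {n R : Type*} [Fintype n] [DecidableEq n] [Nonempty n]
    [CommRing R] : Nat.card (GL n R) = Nat.card Rˣ * Nat.card (SpecialLinearGroup n R) := by
  have hker : ((GeneralLinearGroup.det : GL n R →* Rˣ).ker : Set (GL n R)) = Set.range toGL := by
    rw [MonoidHom.coe_ker, range_toGL]
  rw [Subgroup.card_eq_card_quotient_mul_card_subgroup GeneralLinearGroup.det.ker,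
    Nat.card_congr (QuotientGroup.quotientKerEquivOfSurjective _
      GeneralLinearGroup.det_surjective).toEquiv,
    ← SetLike.coe_sort_coe, hker, Nat.card_range_of_injective toGL_injective]

lemma card_fin_two {F : Type*} [Field F] [Fintype F] :
    Nat.card (SpecialLinearGroup (Fin 2) F) = Fintype.card F ^ 3 - Fintype.card F := by
  have hGL := card_GL_eq_card_units_mul_card (n := Fin 2) (R := F)
  rw [card_GL_field, Fin.prod_univ_two, Nat.card_units, Nat.card_eq_fintype_card] at hGL
  set q := Fintype.card F
  have hq : 1 ≤ q := Fintype.card_pos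
  have hq₂ : q ≤ q ^ 2 := Nat.le_self_pow two_ne_zero q
  have hq₃ : q ≤ q ^ 3 := Nat.le_self_pow three_ne_zero q
  have hGL' : (q - 1) * Nat.card (SpecialLinearGroup (Fin 2) F) = (q - 1) * (q ^ 3 - q) := by
    rw [← hGL]
    simp only [Fin.val_zero, Fin.val_one, pow_zero, pow_one]
    zify [hq, hq₂, hq₃, hq.trans hq₂]
    ring
  exact Nat.eq_of_mul_eq_mul_left (Nat.sub_pos_of_lt Fintype.one_lt_card) hGL'

end SpecialLinearGroup

end Matrix

section TripleProduct
variable {G : Type*} [Group G]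

lemma rightQuotient_coe_subgroup (H : Subgroup G) : rightQuotient (H : Set G) = H := by
  ext g
  constructor
  · rintro ⟨s₁, hs₁, s₂, hs₂, rfl⟩
    exact H.mul_mem hs₁ (H.inv_mem hs₂)
  · intro hg
    exact ⟨g, hg, 1, H.one_mem, by rw [inv_one, mul_one]⟩

lemma tpp_coe_subgroup_iff (H₁ H₂ H₃ : Subgroup G) :
    TPP (H₁ : Set G) H₂ H₃ ↔ ∀ h₁ ∈ H₁, ∀ h₂ ∈ H₂, ∀ h₃ ∈ H₃,
      h₁ * h₂ * h₃ = 1 → h₁ = 1 ∧ h₂ = 1 ∧ h₃ = 1 := by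
  simp only [TPP, rightQuotient_coe_subgroup, SetLike.mem_coe]

end TripleProduct

lemma eq_zero_of_triple_product_eq_one {R : Type*} [CommRing R] {x y z : R}
    (h : !![1, x; 0, 1] * !![1, 0; y, 1] * !![1 + z, z; -z, 1 - z] = 1) :
    x = 0 ∧ y = 0 ∧ z = 0 := by
  simp only [mul_fin_two, one_fin_two, ← Matrix.ext_iff, Fin.forall_fin_two, of_apply, cons_val',
    cons_val_zero, cons_val_one, empty_val', cons_val_fin_one] at h
  obtain ⟨⟨-, e01⟩, e10, e11⟩ := h
  have hy : y = 0 := by linear_combination e10 - e11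
  have hz : z = 0 := by linear_combination z * hy - e11
  refine ⟨?_, hy, hz⟩
  linear_combination e01 - (1 + x * y - x) * hz

section SL2

open SpecialLinearGroup

variable (F : Type*) [Field F]

def sl2K₁ : Subgroup (SpecialLinearGroup (Fin 2) F) :=
  (unipotentHom !![0, 1; 0, 0] (by simp [trace_fin_two]) (by simp [det_fin_two])).range

def sl2K₂ : Subgroup (SpecialLinearGroup (Fin 2) F) :=
  (unipotentHom !![0, 0; 1, 0] (by simp [trace_fin_two]) (by simp [det_fin_two])).range

def sl2K₃ : Subgroup (SpecialLinearGroup (Fin 2) F) :=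
  (unipotentHom !![1, 1; -1, -1] (by simp [trace_fin_two]) (by simp [det_fin_two])).range

variable {F}

lemma coe_sl2K₁ : (sl2K₁ F : Set (SpecialLinearGroup (Fin 2) F)) = sl2H₁ F := by
  ext M
  rw [SetLike.mem_coe, sl2K₁, mem_range_unipotentHom]
  simp [sl2H₁, one_fin_two, smul_of, of_add_of]

lemma coe_sl2K₂ : (sl2K₂ F : Set (SpecialLinearGroup (Fin 2) F)) = sl2H₂ F := by
  ext M
  rw [SetLike.mem_coe, sl2K₂, mem_range_unipotentHom]
  simp [sl2H₂, one_fin_two, smul_of, of_add_of]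

lemma coe_sl2K₃ : (sl2K₃ F : Set (SpecialLinearGroup (Fin 2) F)) = sl2H₃ F := by
  ext M
  rw [SetLike.mem_coe, sl2K₃, mem_range_unipotentHom]
  simp [sl2H₃, one_fin_two, smul_of, of_add_of, sub_eq_add_neg]

lemma ncard_sl2H₁ : (sl2H₁ F).ncard = Nat.card F := by
  rw [← coe_sl2K₁]
  exact ncard_range_unipotentHom _ _ fun h ↦ by simpa using congrFun (congrFun h 0) 1

lemma ncard_sl2H₂ : (sl2H₂ F).ncard = Nat.card F := by
  rw [← coe_sl2K₂]
  exact ncard_range_unipotentHom _ _ fun h ↦ by simpa using congrFun (congrFun h 1) 0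

lemma ncard_sl2H₃ : (sl2H₃ F).ncard = Nat.card F := by
  rw [← coe_sl2K₃]
  exact ncard_range_unipotentHom _ _ fun h ↦ by simpa using congrFun (congrFun h 0) 0

lemma tpp_sl2H : TPP (sl2H₁ F) (sl2H₂ F) (sl2H₃ F) := by
  rw [← coe_sl2K₁, ← coe_sl2K₂, ← coe_sl2K₃, tpp_coe_subgroup_iff]
  intro M₁ hM₁ M₂ hM₂ M₃ hM₃ h
  obtain ⟨x, hx⟩ : M₁ ∈ sl2H₁ F := by rwa [← coe_sl2K₁]
  obtain ⟨y, hy⟩ : M₂ ∈ sl2H₂ F := by rwa [← coe_sl2K₂]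
  obtain ⟨z, hz⟩ : M₃ ∈ sl2H₃ F := by rwa [← coe_sl2K₃]
  have hprod : M₁.val * M₂.val * M₃.val = 1 := congrArg Subtype.val h
  rw [hx, hy, hz] at hprod
  obtain ⟨rfl, rfl, rfl⟩ := eq_zero_of_triple_product_eq_one hprod
  refine ⟨Subtype.ext ?_, Subtype.ext ?_, Subtype.ext ?_⟩ <;>
    simp [hx, hy, hz, one_fin_two]

end SL2

theorem stmt_6 (F : Type*) [Field F] [Fintype F] (q : ℕ) (hq : Fintype.card F = q) :
    (∃ K₁ K₂ K₃ : Subgroup (Matrix.SpecialLinearGroup (Fin 2) F),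
      (K₁ : Set (Matrix.SpecialLinearGroup (Fin 2) F)) = sl2H₁ F ∧
      (K₂ : Set (Matrix.SpecialLinearGroup (Fin 2) F)) = sl2H₂ F ∧
      (K₃ : Set (Matrix.SpecialLinearGroup (Fin 2) F)) = sl2H₃ F) ∧
    (sl2H₁ F).ncard = q ∧ (sl2H₂ F).ncard = q ∧ (sl2H₃ F).ncard = q ∧
    TPP (sl2H₁ F) (sl2H₂ F) (sl2H₃ F) ∧
    Nat.card (Matrix.SpecialLinearGroup (Fin 2) F) = q ^ 3 - q ∧
    Realizes (Matrix.SpecialLinearGroup (Fin 2) F) q q q := by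
  have hcard : Nat.card F = q := Nat.card_eq_fintype_card.trans hq
  have h₁ : (sl2H₁ F).ncard = q := ncard_sl2H₁.trans hcard
  have h₂ : (sl2H₂ F).ncard = q := ncard_sl2H₂.trans hcard
  have h₃ : (sl2H₃ F).ncard = q := ncard_sl2H₃.trans hcard
  exact ⟨⟨sl2K₁ F, sl2K₂ F, sl2K₃ F, coe_sl2K₁, coe_sl2K₂, coe_sl2K₃⟩, h₁, h₂, h₃, tpp_sl2H,
    hq ▸ Matrix.SpecialLinearGroup.card_fin_two,
    ⟨_, _, _, Set.toFinite _, Set.toFinite _, Set.toFinite _, h₁, h₂, h₃, tpp_sl2H⟩⟩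
end

section
/- Let m ≥ 3. The dihedral group D_m of order 2m, generated by x and y with y² = x^m = 1 and yxy = x⁻¹, realizes ⟨2, 2, 2⌊m/3⌋⟩: the subsets S₁ = {1, y}, S₂ = {1, yx²}, and S₃ = {x^{3k} : 0 ≤ k < ⌈(m−2)/3⌉} ∪ {yx^{3k+1} : 0 ≤ k < ⌈(m−2)/3⌉}, of sizes 2, 2, and 2⌊m/3⌋ respectively, satisfy the triple product property. -/
/-- The subset `S₁ = {1, y}` of the dihedral group (with `y = sr 0`). -/
def dS₁ (m : ℕ) : Set (DihedralGroup m) := {1, DihedralGroup.sr 0}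

/-- The subset `S₂ = {1, yx²}` of the dihedral group (with `yx² = sr 2`). -/
def dS₂ (m : ℕ) : Set (DihedralGroup m) := {1, DihedralGroup.sr 2}

/-- The subset `S₃ = {x^{3k} : 0 ≤ k < ⌈(m−2)/3⌉} ∪ {yx^{3k+1} : 0 ≤ k < ⌈(m−2)/3⌉}`
of the dihedral group; note that `⌈(m−2)/3⌉ = ⌊m/3⌋` for `m ≥ 2`. -/
def dS₃ (m : ℕ) : Set (DihedralGroup m) :=
  {g | ∃ k : ℕ, k < m / 3 ∧ g = DihedralGroup.r ((3 * k : ℕ) : ZMod m)} ∪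
  {g | ∃ k : ℕ, k < m / 3 ∧ g = DihedralGroup.sr ((3 * k + 1 : ℕ) : ZMod m)}

/-!
Because `y` and `yx²` are involutions, `Q(S₁) = {1, y}` and `Q(S₂) = {1, yx²}`, and the triple
product property reduces to `y, yx², y · yx² = x² ∉ Q(S₃)`. The rotations in `Q(S₃)` are
`x^(3a - 3b)` and its reflections `yx^(3a + 1 - 3b)` with `3a + 2, 3b + 2 < m`. Hence `x^j` or
`yx^j` with `j < 3` lies in `Q(S₃)` only if `3b + j ≡ 3a` resp. `3b + j ≡ 3a + 1` modulo `m`,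
where both sides are below `m`; so the congruence holds in `ℕ`, forcing `j = 0` resp. `j = 1`.
-/

open DihedralGroup

section TripleProduct

variable {G : Type*} [Group G]

lemma inv_mem_rightQuotient {S : Set G} {q : G} (hq : q ∈ rightQuotient S) :
    q⁻¹ ∈ rightQuotient S := by
  obtain ⟨s₁, hs₁, s₂, hs₂, rfl⟩ := hq
  exact ⟨s₂, hs₂, s₁, hs₁, by group⟩

lemma rightQuotient_pair_one_subset {a : G} (ha : a⁻¹ = a) :
    rightQuotient {1, a} ⊆ {1, a} := by
  rintro _ ⟨s₁, hs₁, s₂, hs₂, rfl⟩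
  rcases hs₁ with rfl | rfl <;> rcases hs₂ with rfl | rfl <;> simp
  exact Or.inr ha

lemma TPP.of_mul_mem {S₁ S₂ S₃ : Set G}
    (h : ∀ q₁ ∈ rightQuotient S₁, ∀ q₂ ∈ rightQuotient S₂,
      q₁ * q₂ ∈ rightQuotient S₃ → q₁ = 1 ∧ q₂ = 1) :
    TPP S₁ S₂ S₃ := by
  intro q₁ hq₁ q₂ hq₂ q₃ hq₃ heq
  have hq₃' : q₃ = (q₁ * q₂)⁻¹ := eq_inv_of_mul_eq_one_right heq
  obtain ⟨rfl, rfl⟩ := h q₁ hq₁ q₂ hq₂ (by simpa [hq₃'] using inv_mem_rightQuotient hq₃)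
  simpa using heq

lemma tpp_pair_pair {a b : G} {S : Set G} (ha : a⁻¹ = a) (hb : b⁻¹ = b)
    (haS : a ∉ rightQuotient S) (hbS : b ∉ rightQuotient S) (habS : a * b ∉ rightQuotient S) :
    TPP {1, a} {1, b} S := by
  refine TPP.of_mul_mem fun q₁ hq₁ q₂ hq₂ hq => ?_
  rcases rightQuotient_pair_one_subset ha hq₁ with rfl | rfl <;>
    rcases rightQuotient_pair_one_subset hb hq₂ with rfl | rfl
  · exact ⟨rfl, rfl⟩
  all_goals simp_all

end TripleProduct

lemma ZMod.add_eq_of_natCast_eq_sub {n a b c : ℕ} (h : (c : ZMod n) = a - b) (ha : a < n)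
    (hbc : b + c < n) : b + c = a :=
  CharP.natCast_injOn_Iio (ZMod n) n hbc ha (by push_cast; rw [h]; ring)

namespace DihedralGroup

variable {m : ℕ}

lemma eq_zero_of_r_natCast_mem_rightQuotient_dS₃ {j : ℕ} (hj : j < 3)
    (h : r (j : ZMod m) ∈ rightQuotient (dS₃ m)) : j = 0 := by
  obtain ⟨s₁, hs₁, s₂, hs₂, hq⟩ := h
  rcases hs₁ with ⟨a, ha, rfl⟩ | ⟨a, ha, rfl⟩ <;> rcases hs₂ with ⟨b, hb, rfl⟩ | ⟨b, hb, rfl⟩ <;>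
    simp only [inv_r, inv_sr, r_mul_r, r_mul_sr, sr_mul_r, sr_mul_sr, r.injEq, reduceCtorEq,
      ← sub_eq_add_neg] at hq
  · have := ZMod.add_eq_of_natCast_eq_sub hq (by omega) (by omega)
    omega
  · -- cancel the `+ 1`s first: `3a + 1 + j` may equal `m`
    have := ZMod.add_eq_of_natCast_eq_sub (a := 3 * b) (b := 3 * a)
      (by rw [hq]; push_cast; ring) (by omega) (by omega)
    omega

lemma eq_one_of_sr_natCast_mem_rightQuotient_dS₃ {j : ℕ} (hj : j < 3)
    (h : sr (j : ZMod m) ∈ rightQuotient (dS₃ m)) : j = 1 := by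
  obtain ⟨s₁, hs₁, s₂, hs₂, hq⟩ := h
  rcases hs₁ with ⟨a, ha, rfl⟩ | ⟨a, ha, rfl⟩ <;> rcases hs₂ with ⟨b, hb, rfl⟩ | ⟨b, hb, rfl⟩ <;>
    simp only [inv_r, inv_sr, r_mul_r, r_mul_sr, sr_mul_r, sr_mul_sr, sr.injEq, reduceCtorEq,
      ← sub_eq_add_neg] at hq
  all_goals
    have := ZMod.add_eq_of_natCast_eq_sub hq (by omega) (by omega)
    omega

lemma tpp_dS₁_dS₂_dS₃ : TPP (dS₁ m) (dS₂ m) (dS₃ m) := by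
  refine tpp_pair_pair (inv_sr 0) (inv_sr 2) (fun h => ?_) (fun h => ?_) (fun h => ?_)
  · simpa using eq_one_of_sr_natCast_mem_rightQuotient_dS₃ (j := 0) (by norm_num) (by simpa using h)
  · simpa using eq_one_of_sr_natCast_mem_rightQuotient_dS₃ (j := 2) (by norm_num) (by simpa using h)
  · rw [sr_mul_sr, sub_zero] at h
    simpa using eq_zero_of_r_natCast_mem_rightQuotient_dS₃ (j := 2) (by norm_num) (by simpa using h)

lemma dS₃_eq_union_image : dS₃ m =
    (fun k : ℕ => r ((3 * k : ℕ) : ZMod m)) '' Set.Iio (m / 3) ∪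
      (fun k : ℕ => sr ((3 * k + 1 : ℕ) : ZMod m)) '' Set.Iio (m / 3) := by
  ext g
  simp [dS₃, eq_comm]

lemma injOn_natCast_three_mul_add {c : ℕ} (hc : c < 3) :
    (Set.Iio (m / 3)).InjOn (fun k : ℕ => ((3 * k + c : ℕ) : ZMod m)) := by
  intro a ha b hb h
  simp only [Set.mem_Iio] at ha hb
  have := CharP.natCast_injOn_Iio (ZMod m) m (Set.mem_Iio.2 (by omega)) (Set.mem_Iio.2 (by omega)) h
  omega

lemma finite_dS₃ : (dS₃ m).Finite :=
  dS₃_eq_union_image ▸ Set.toFinite _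

lemma ncard_dS₃ : (dS₃ m).ncard = 2 * (m / 3) := by
  have hr : ((fun k : ℕ => r ((3 * k : ℕ) : ZMod m)) '' Set.Iio (m / 3)).ncard = m / 3 := by
    rw [Set.InjOn.ncard_image, Set.ncard_Iio_nat]
    exact fun a ha b hb h => injOn_natCast_three_mul_add (c := 0) (by norm_num) ha hb (r.inj h)
  have hsr : ((fun k : ℕ => sr ((3 * k + 1 : ℕ) : ZMod m)) '' Set.Iio (m / 3)).ncard = m / 3 := by
    rw [Set.InjOn.ncard_image, Set.ncard_Iio_nat]
    exact fun a ha b hb h => injOn_natCast_three_mul_add (c := 1) (by norm_num) ha hb (sr.inj h)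
  rw [dS₃_eq_union_image, Set.ncard_union_eq ?disjoint, hr, hsr]
  · ring
  case disjoint =>
    rw [Set.disjoint_left]
    rintro _ ⟨_, -, rfl⟩ ⟨_, -, h⟩
    simp at h

end DihedralGroup

theorem stmt_16_general (m : ℕ) :
    (dS₁ m).ncard = 2 ∧ (dS₂ m).ncard = 2 ∧ (dS₃ m).ncard = 2 * (m / 3) ∧
    TPP (dS₁ m) (dS₂ m) (dS₃ m) ∧
    Realizes (DihedralGroup m) 2 2 (2 * (m / 3)) := by
  have h₁ : (dS₁ m).ncard = 2 := Set.ncard_pair nofun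
  have h₂ : (dS₂ m).ncard = 2 := Set.ncard_pair nofun
  refine ⟨h₁, h₂, ncard_dS₃, tpp_dS₁_dS₂_dS₃, dS₁ m, dS₂ m, dS₃ m, Set.toFinite {1, sr 0},
    Set.toFinite {1, sr 2}, finite_dS₃, h₁, h₂, ncard_dS₃, tpp_dS₁_dS₂_dS₃⟩

theorem stmt_16 (m : ℕ) (hm : 3 ≤ m) :
    (dS₁ m).ncard = 2 ∧ (dS₂ m).ncard = 2 ∧ (dS₃ m).ncard = 2 * (m / 3) ∧
    TPP (dS₁ m) (dS₂ m) (dS₃ m) ∧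
    Realizes (DihedralGroup m) 2 2 (2 * (m / 3)) :=
  stmt_16_general m
end
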